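/- Let G be a compact topological group with Haar probability measure μ, let V be a real Banach space on which G acts continuously by linear isometries, and let n ≥ 1. Let ρ : Gⁿ → V be continuous, with coboundary δρ(s₀, …, sₙ) := s₀ • ρ(s₁, …, sₙ) + Σ_{i=1}^{n} (−1)^i ρ(s₀, …, s_{i−1} s_i, …, sₙ) + (−1)^{n+1} ρ(s₀, …, s_{n−1}). Define hβ for a continuous (n+1)-cochain β by (hβ)(t₁, …, tₙ) := (−1)^{n+1} ∫_G β(t₁, …, tₙ, v) dμ(v), and set ρ' := δ(h ρ), a continuous n-cochain. Then ρ' is an n-cocycle (δρ' = 0), ρ' is moreover the coboundary of a continuous (n−1)-cochain, and sup_{Gⁿ} ‖ρ'(x) − ρ(x)‖ ≤ sup_{Gⁿ⁺¹} ‖δρ(y)‖. In particular, every continuous almost-n-cocycle ρ (one with sup ‖δρ‖ ≤ ε) is uniformly within ε of an actual continuous n-cocycle, which is even a coboundary. -/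

import Mathlib

/-
Averaging out the last variable against Haar measure, `h`, is a contracting homotopy of the
complex of continuous cochains in positive degrees: `δ h + h δ = id`. Indeed, in `δρ(t, v)` all
faces except the last two are faces of the cochain `u ↦ ρ(u, v)`, the last one is `±ρ(t)`, and
the face `ρ(…, tₙ v)` has the same integral over `v` as `ρ(…, v)` by left invariance. Hence
`ρ' = δ(hρ) = ρ - h(δρ)` is a coboundary, hence a cocycle since `δδ = 0`, and
`‖ρ' - ρ‖ = ‖h(δρ)‖ ≤ sup ‖δρ‖` because `h` averages against a probability
measure. The identity `δδ = 0` is transferred from Mathlib's complex of inhomogeneous cochains.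
-/

open MeasureTheory

/-- The inhomogeneous coboundary operator on continuous cochains:
`δρ(s₀,…,sₙ) = s₀ • ρ(s₁,…,sₙ) + Σ_{i=1}^{n} (-1)^i ρ(s₀,…,s_{i-1}s_i,…,sₙ)
  + (-1)^{n+1} ρ(s₀,…,s_{n-1})`. -/
def coboundary {G : Type*} [Group G] {V : Type*} [NormedAddCommGroup V] [NormedSpace ℝ V]
    (σ : G →* (V ≃ₗᵢ[ℝ] V)) (n : ℕ) (ρ : (Fin n → G) → V) :
    (Fin (n + 1) → G) → V := fun s =>
  σ (s 0) (ρ fun i => s i.succ)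
    + ∑ i : Fin n, ((-1 : ℝ) ^ (i.val + 1)) •
        ρ (fun j => if j.val < i.val then s j.castSucc
            else if j.val = i.val then s j.castSucc * s j.succ
            else s j.succ)
    + ((-1 : ℝ) ^ (n + 1)) • ρ (fun j => s j.castSucc)

/-- The averaging operator on cochains:
`(hβ)(t₁,…,tₙ) = (-1)^{n+1} ∫_G β(t₁,…,tₙ,v) dμ(v)` for an `(n+1)`-cochain `β`. -/
noncomputable def avg {G : Type*} [Group G] [TopologicalSpace G] [MeasurableSpace G]
    {V : Type*} [NormedAddCommGroup V] [NormedSpace ℝ V]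
    (μ : Measure G) (n : ℕ) (β : (Fin (n + 1) → G) → V) : (Fin n → G) → V :=
  fun t => ((-1 : ℝ) ^ (n + 1)) • ∫ v : G, β (Fin.snoc t v) ∂μ

namespace Fin

variable {α : Type*} {n : ℕ}

theorem tail_snoc (t : Fin (n + 1) → α) (v : α) :
    tail (snoc t v : Fin (n + 2) → α) = snoc (tail t) v := by
  funext k
  induction k using lastCases with
  | last => simp [tail]
  | cast i => simp only [tail, ← castSucc_succ, snoc_castSucc]

theorem contractNth_last (op : α → α → α) (t : Fin (n + 1) → α) :
    contractNth (last n) op t = init t := by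
  funext k
  rw [contractNth_apply_of_lt _ _ _ _ (by simp), init]

variable [Mul α]

theorem contractNth_castSucc_castSucc_snoc (i : Fin n) (t : Fin (n + 1) → α) (v : α) :
    contractNth i.castSucc.castSucc (· * ·) (snoc t v : Fin (n + 2) → α)
      = snoc (contractNth i.castSucc (· * ·) t) v := by
  funext k
  induction k using lastCases with
  | last =>
    rw [contractNth_apply_of_gt _ _ _ _ (by simp), succ_last, snoc_last, snoc_last]
  | cast k =>
    rw [snoc_castSucc]
    rcases lt_trichotomy k.val i.val with h | h | h
    · rw [contractNth_apply_of_lt _ _ _ _ (by simpa using h),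
        contractNth_apply_of_lt _ _ _ _ (by simpa using h), snoc_castSucc]
    · rw [contractNth_apply_of_eq _ _ _ _ (by simpa using h),
        contractNth_apply_of_eq _ _ _ _ (by simpa using h), succ_castSucc,
        snoc_castSucc, snoc_castSucc]
    · rw [contractNth_apply_of_gt _ _ _ _ (by simpa using h),
        contractNth_apply_of_gt _ _ _ _ (by simpa using h), succ_castSucc, snoc_castSucc]

theorem contractNth_last_castSucc_snoc (t : Fin (n + 1) → α) (v : α) :
    contractNth (last n).castSucc (· * ·) (snoc t v : Fin (n + 2) → α)
      = snoc (init t) (t (last n) * v) := by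
  funext k
  induction k using lastCases with
  | last =>
    rw [contractNth_apply_of_eq _ _ _ _ (by simp), snoc_last, succ_last, snoc_last, snoc_castSucc]
  | cast k =>
    rw [contractNth_apply_of_lt _ _ _ _ (by simp), snoc_castSucc, snoc_castSucc, init]

end Fin

section Coboundary

variable {G : Type*} [Group G] {V : Type*} [NormedAddCommGroup V] [NormedSpace ℝ V]
  (σ : G →* (V ≃ₗᵢ[ℝ] V))

theorem coboundary_apply {n : ℕ} (ρ : (Fin n → G) → V) (s : Fin (n + 1) → G) :
    coboundary σ n ρ s = σ (s 0) (ρ (Fin.tail s))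
      + ∑ j : Fin (n + 1), (-1 : ℝ) ^ (j.val + 1) • ρ (Fin.contractNth j (· * ·) s) := by
  rw [Fin.sum_univ_castSucc, Fin.contractNth_last, coboundary, add_assoc]
  rfl

theorem coboundary_smul {n : ℕ} (c : ℝ) (ρ : (Fin n → G) → V) :
    coboundary σ n (c • ρ) = c • coboundary σ n ρ := by
  funext s
  simp only [coboundary_apply, Pi.smul_apply, map_smul, smul_add, Finset.smul_sum, smul_comm c]

theorem coboundary_snoc {n : ℕ} (ρ : (Fin (n + 1) → G) → V) (t : Fin (n + 1) → G) (v : G) :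
    coboundary σ (n + 1) ρ (Fin.snoc t v)
      = coboundary σ n (fun u => ρ (Fin.snoc u v)) t
        + (-1 : ℝ) ^ (n + 1) • (ρ (Fin.snoc (Fin.init t) (t (Fin.last n) * v))
          - ρ (Fin.snoc (Fin.init t) v))
        + (-1 : ℝ) ^ (n + 2) • ρ t := by
  simp only [coboundary_apply, Fin.sum_univ_castSucc, Fin.snoc_apply_zero, Fin.tail_snoc,
    Fin.contractNth_castSucc_castSucc_snoc, Fin.contractNth_last_castSucc_snoc,
    Fin.contractNth_last, Fin.init_snoc, Fin.val_castSucc, Fin.val_last]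
  module

end Coboundary

section Transfer

universe u v

variable {G : Type u} {V : Type v}

theorem ULift.down_contractNth [Mul G] {n : ℕ} (j : Fin (n + 1))
    (g : Fin (n + 1) → ULift.{v} G) :
    (fun i => (Fin.contractNth j (· * ·) g i).down)
      = Fin.contractNth j (· * ·) fun i => (g i).down := by
  funext i
  simp only [Fin.contractNth]
  split_ifs <;> rfl

def uliftCochain {n : ℕ} (ρ : (Fin n → G) → V) : (Fin n → ULift.{v} G) → ULift.{u} V :=
  fun g => ⟨ρ fun i => (g i).down⟩

theorem uliftCochain_injective {n : ℕ} :
    Function.Injective (uliftCochain (G := G) (V := V) (n := n)) :=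
  fun _ _ h => funext fun s => congrArg ULift.down (congrFun h fun i => ⟨s i⟩)

variable [Group G] [NormedAddCommGroup V] [NormedSpace ℝ V] (σ : G →* (V ≃ₗᵢ[ℝ] V))

/-- `Rep` and `groupCohomology.inhomogeneousCochains.d_comp_d` need the scalars, the group and
the module in a single universe, so `σ` is lifted to `max u v`. -/
def uliftRepresentation :
    Representation (ULift.{max u v} ℝ) (ULift.{v} G) (ULift.{u} V) where
  toFun g :=
    { toFun x := ⟨σ g.down x.down⟩
      map_add' x y := ULift.ext _ _ (map_add _ _ _)
      map_smul' c x := ULift.ext _ _ (map_smul _ _ _) }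
  map_one' := by ext x; simp
  map_mul' g h := by ext x; simp

theorem uliftCochain_coboundary {n : ℕ} (ρ : (Fin n → G) → V) :
    uliftCochain (coboundary σ n ρ)
      = (inhomogeneousCochains.d (Rep.of (uliftRepresentation σ)) n).hom (uliftCochain ρ) := by
  funext g
  apply AddEquiv.ulift.injective
  simp only [inhomogeneousCochains.d, ModuleCat.hom_ofHom, LinearMap.coe_mk, AddHom.coe_mk,
    map_add, map_sum, uliftCochain, coboundary_apply, ← ULift.down_contractNth]
  rfl

theorem coboundary_coboundary {n : ℕ} (ρ : (Fin n → G) → V) :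
    coboundary σ (n + 1) (coboundary σ n ρ) = 0 := by
  refine uliftCochain_injective ?_
  rw [uliftCochain_coboundary, uliftCochain_coboundary]
  exact LinearMap.congr_fun
    (congrArg ModuleCat.Hom.hom (groupCohomology.inhomogeneousCochains.d_comp_d n _)) _

end Transfer

section Integral

variable {G : Type*} [Group G] {V : Type*} [NormedAddCommGroup V] [NormedSpace ℝ V]
  (σ : G →* (V ≃ₗᵢ[ℝ] V)) {X : Type*} [MeasurableSpace X] {μ : Measure X} {n : ℕ}
  {f : X → (Fin n → G) → V}

theorem integrable_coboundary_apply (hf : ∀ u, Integrable (fun x => f x u) μ)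
    (s : Fin (n + 1) → G) : Integrable (fun x => coboundary σ n (f x) s) μ := by
  simp only [coboundary_apply]
  exact ((σ (s 0)).toContinuousLinearEquiv.toContinuousLinearMap.integrable_comp (hf _)).add
    (integrable_finsetSum _ fun j _ => (hf _).smul _)

theorem integral_coboundary_apply [CompleteSpace V] (hf : ∀ u, Integrable (fun x => f x u) μ)
    (s : Fin (n + 1) → G) :
    ∫ x, coboundary σ n (f x) s ∂μ = coboundary σ n (fun u => ∫ x, f x u ∂μ) s := by
  simp only [coboundary_apply]
  rw [integral_add, integral_finsetSum]
  · simp only [integral_smul]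
    congr 1
    exact (σ (s 0)).toLinearIsometry.integral_comp_comm _
  · exact fun j _ => (hf _).smul _
  · exact (σ (s 0)).toContinuousLinearEquiv.toContinuousLinearMap.integrable_comp (hf _)
  · exact integrable_finsetSum _ fun j _ => (hf _).smul _

end Integral

section Homotopy

variable {G : Type*} [Group G] [MeasurableSpace G] [MeasurableMul G] {μ : Measure G}
  [μ.IsMulLeftInvariant] [IsProbabilityMeasure μ]
  {V : Type*} [NormedAddCommGroup V] [NormedSpace ℝ V] [CompleteSpace V]
  (σ : G →* (V ≃ₗᵢ[ℝ] V)) {n : ℕ} {ρ : (Fin (n + 1) → G) → V}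

theorem integral_coboundary_snoc (hρ : ∀ u, Integrable (fun v => ρ (Fin.snoc u v)) μ)
    (t : Fin (n + 1) → G) :
    ∫ v, coboundary σ (n + 1) ρ (Fin.snoc t v) ∂μ
      = coboundary σ n (fun u => ∫ v, ρ (Fin.snoc u v) ∂μ) t + (-1 : ℝ) ^ (n + 2) • ρ t := by
  have htrans := (hρ (Fin.init t)).comp_mul_left (t (Fin.last n))
  simp only [coboundary_snoc]
  have hshift : Integrable (fun v => (-1 : ℝ) ^ (n + 1) •
      (ρ (Fin.snoc (Fin.init t) (t (Fin.last n) * v)) - ρ (Fin.snoc (Fin.init t) v))) μ :=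
    (htrans.sub (hρ _)).smul _
  rw [integral_add, integral_add (integrable_coboundary_apply σ hρ t) hshift, integral_smul,
    integral_sub htrans (hρ _),
    integral_mul_left_eq_self (fun v => ρ (Fin.snoc (Fin.init t) v)), sub_self, smul_zero,
    add_zero, integral_coboundary_apply σ hρ, integral_const, probReal_univ, one_smul]
  · exact (integrable_coboundary_apply σ hρ t).add hshift
  · exact integrable_const _

theorem coboundary_avg_add_avg_coboundary [TopologicalSpace G]
    (hρ : ∀ u, Integrable (fun v => ρ (Fin.snoc u v)) μ) :
    coboundary σ n (avg μ n ρ) + avg μ (n + 1) (coboundary σ (n + 1) ρ) = ρ := by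
  funext t
  have havg : avg μ n ρ = (-1 : ℝ) ^ (n + 1) • fun u => ∫ v, ρ (Fin.snoc u v) ∂μ := rfl
  have hsign : (-1 : ℝ) ^ (n + 1 + 1) = -(-1) ^ (n + 1) := by ring
  have hsquare : (-1 : ℝ) ^ (n + 1 + 1) * (-1) ^ (n + 2) = 1 := by
    rw [← pow_add]
    exact Even.neg_one_pow ⟨n + 2, by omega⟩
  rw [Pi.add_apply, havg, coboundary_smul, avg, integral_coboundary_snoc σ hρ, Pi.smul_apply,
    smul_add, smul_smul, hsquare, one_smul, hsign, neg_smul, add_neg_cancel_left]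

end Homotopy

section Continuity

variable {G : Type*} [Group G] [TopologicalSpace G]
  {V : Type*} [NormedAddCommGroup V] [NormedSpace ℝ V] {n : ℕ}

theorem continuous_contractNth {α : Type*} [TopologicalSpace α] [Mul α] [ContinuousMul α]
    (j : Fin (n + 1)) : Continuous fun s : Fin (n + 1) → α => Fin.contractNth j (· * ·) s := by
  refine continuous_pi fun k => ?_
  simp only [Fin.contractNth]
  split_ifs
  · exact continuous_apply _
  · exact (continuous_apply _).mul (continuous_apply _)
  · exact continuous_apply _

theorem continuous_coboundary [ContinuousMul G] (σ : G →* (V ≃ₗᵢ[ℝ] V))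
    (hσ : Continuous fun p : G × V => σ p.1 p.2) {ρ : (Fin n → G) → V} (hρ : Continuous ρ) :
    Continuous (coboundary σ n ρ) := by
  rw [show coboundary σ n ρ = _ from funext (coboundary_apply σ ρ)]
  have htail : Continuous fun s : Fin (n + 1) → G => Fin.tail s :=
    continuous_pi fun i => continuous_apply i.succ
  exact (hσ.comp ((continuous_apply 0).prodMk (hρ.comp htail))).add <|
    continuous_finsetSum _ fun j _ =>
      (hρ.comp (continuous_contractNth j)).const_smul ((-1 : ℝ) ^ (j.val + 1))

theorem continuous_avg [CompactSpace G] [MeasurableSpace G] [OpensMeasurableSpace G]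
    (μ : Measure G) [IsFiniteMeasureOnCompacts μ] {β : (Fin (n + 1) → G) → V}
    (hβ : Continuous β) : Continuous (avg μ n β) :=
  (continuousOn_univ.1 <| continuousOn_integral_of_compact_support
    (f := fun t v => β (Fin.snoc t v)) isCompact_univ
    (hβ.comp (continuous_fst.finSnoc continuous_snd)).continuousOn
    fun _ _ _ h => absurd (Set.mem_univ _) h).const_smul _

end Continuity

theorem norm_avg_le {G : Type*} [Group G] [TopologicalSpace G] [MeasurableSpace G]
    {V : Type*} [NormedAddCommGroup V] [NormedSpace ℝ V] (μ : Measure G)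
    [IsProbabilityMeasure μ] {n : ℕ} {β : (Fin (n + 1) → G) → V} {C : ℝ}
    (hβ : ∀ y, ‖β y‖ ≤ C) (t : Fin n → G) :
    ‖avg μ n β t‖ ≤ C := by
  rw [avg, norm_smul, norm_pow, norm_neg, norm_one, one_pow, one_mul]
  simpa using norm_integral_le_of_norm_le_const (μ := μ) (ae_of_all _ fun v => hβ (Fin.snoc t v))

/-- (Abelian stability theorem.) For a compact group `G` with Haar
probability measure acting continuously by linear isometries on a real Banach space `V`,
and a continuous `n`-cochain `ρ` (`n = m + 1 ≥ 1`), the cochain `ρ' := δ(hρ)` is a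
continuous `n`-cocycle, is the coboundary of a continuous `(n-1)`-cochain, and satisfies
`sup ‖ρ' - ρ‖ ≤ sup ‖δρ‖`. -/
theorem almost_cocycles_near_cocycles {G : Type*} [Group G] [TopologicalSpace G]
    [IsTopologicalGroup G] [CompactSpace G] [MeasurableSpace G] [BorelSpace G]
    (μ : Measure G) [μ.IsHaarMeasure] [IsProbabilityMeasure μ]
    {V : Type*} [NormedAddCommGroup V] [NormedSpace ℝ V] [CompleteSpace V]
    (σ : G →* (V ≃ₗᵢ[ℝ] V)) (hσ : Continuous fun p : G × V => σ p.1 p.2)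
    (m : ℕ) (ρ : (Fin (m + 1) → G) → V) (hρ : Continuous ρ)
    (ρ' : (Fin (m + 1) → G) → V) (hρ' : ρ' = coboundary σ m (avg μ m ρ)) :
    Continuous ρ' ∧
      coboundary σ (m + 1) ρ' = 0 ∧
      (∃ α : (Fin m → G) → V, Continuous α ∧ ρ' = coboundary σ m α) ∧
      (⨆ x : Fin (m + 1) → G, ‖ρ' x - ρ x‖) ≤
        ⨆ y : Fin (m + 2) → G, ‖coboundary σ (m + 1) ρ y‖ := by
  subst hρ'
  have hα : Continuous (avg μ m ρ) := continuous_avg μ hρ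
  refine ⟨continuous_coboundary σ hσ hα, coboundary_coboundary σ _, ⟨_, hα, rfl⟩,
    ciSup_le fun x => ?_⟩
  have hδρ := (isCompact_range (continuous_coboundary σ hσ hρ).norm).bddAbove
  have hfiber u : Integrable (fun v => ρ (Fin.snoc u v)) μ :=
    (hρ.comp (by fun_prop)).integrable_of_hasCompactSupport (.of_compactSpace _)
  rw [← congrFun (coboundary_avg_add_avg_coboundary σ hfiber) x, Pi.add_apply,
    sub_add_cancel_left, norm_neg]
  exact norm_avg_le μ (fun y => le_ciSup hδρ y) x
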